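/- arXiv:2504.14351 — 8 statements merged into one kernel-verified Lean document; each statement's English description precedes it below -/
import Mathlib

section
/- Let m be a positive natural number and s : Fin m → ℝ be a function with s i > 0 for all i, sorted in decreasing order (i.e., i ≤ j implies s i ≥ s j). Then for every k ≤ m, (∑_{i < k} Real.sqrt (s i)) · (∑_{i} s i) ≤ (∑_{i < k} s i) · (∑_{i} Real.sqrt (s i)). Equivalently, the cumulative share of total weight held by the k largest validators under square-root stake weights is at most their share under linear stake weights. -/
/-!
Split the validators into the top `k` and the rest. For a top stake `x` and a lower stake
`y ≤ x` we have `√x * y ≤ x * √y`, i.e. the ratio `√s / s` increases down the ranking.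
Summing this cross inequality over all pairs gives the claim after adding the common term
`(∑_{top} √s) * (∑_{top} s)` to both sides.
-/

open Finset

theorem Real.sqrt_mul_le_mul_sqrt_of_le {x y : ℝ} (hy : 0 ≤ y) (hyx : y ≤ x) :
    √x * y ≤ x * √y :=
  calc √x * y = √x * √y * √y := by rw [mul_assoc, Real.mul_self_sqrt hy]
    _ ≤ √x * √y * √x := by gcongr
    _ = x * √y := by rw [mul_right_comm, Real.mul_self_sqrt (hy.trans hyx)]

section CrossInequality

variable {ι R : Type*} [CommRing R] [PartialOrder R] [IsOrderedRing R] {f g : ι → R}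

theorem Finset.sum_mul_sum_le_sum_mul_sum_of_cross {A B : Finset ι}
    (h : ∀ i ∈ A, ∀ j ∈ B, f i * g j ≤ g i * f j) :
    (∑ i ∈ A, f i) * (∑ j ∈ B, g j) ≤ (∑ i ∈ A, g i) * (∑ j ∈ B, f j) := by
  rw [sum_mul_sum, sum_mul_sum]
  exact sum_le_sum fun i hi => sum_le_sum fun j hj => h i hi j hj

theorem Finset.sum_filter_mul_sum_le_of_cross (s : Finset ι) (p : ι → Prop) [DecidablePred p]
    (h : ∀ i ∈ s, ∀ j ∈ s, p i → ¬ p j → f i * g j ≤ g i * f j) :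
    (∑ i ∈ s.filter p, f i) * (∑ i ∈ s, g i) ≤ (∑ i ∈ s.filter p, g i) * (∑ i ∈ s, f i) := by
  have hcross := sum_mul_sum_le_sum_mul_sum_of_cross (f := f) (g := g)
    (A := s.filter p) (B := s.filter (¬ p ·)) fun i hi j hj =>
      h i (mem_filter.1 hi).1 j (mem_filter.1 hj).1 (mem_filter.1 hi).2 (mem_filter.1 hj).2
  rw [← sum_filter_add_sum_filter_not s p g, ← sum_filter_add_sum_filter_not s p f,
    mul_add, mul_add, mul_comm (∑ i ∈ s.filter p, f i) (∑ i ∈ s.filter p, g i)]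
  exact add_le_add_right hcross _

end CrossInequality

theorem srsw_lorenz_dominance_general (m : ℕ) (s : Fin m → ℝ)
    (hs : ∀ i, 0 < s i)
    (hsorted : ∀ i j : Fin m, i ≤ j → s j ≤ s i) :
    ∀ k : ℕ, k ≤ m →
      (∑ i ∈ univ.filter (fun i : Fin m => (i : ℕ) < k), Real.sqrt (s i)) * (∑ i, s i) ≤
        (∑ i ∈ univ.filter (fun i : Fin m => (i : ℕ) < k), s i) * (∑ i, Real.sqrt (s i)) := by
  intro k _
  refine sum_filter_mul_sum_le_of_cross univ _ fun i _ j _ hik hjk => ?_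
  have hij : i ≤ j := Fin.le_def.2 (hik.le.trans (not_lt.1 hjk))
  exact Real.sqrt_mul_le_mul_sqrt_of_le (hs j).le (hsorted i j hij)

/-- Lorenz dominance of square-root stake weights over linear stake weights:
for stakes `s` sorted in decreasing order, the cumulative share of total weight
of the top `k` validators under `√` weights is at most that under linear weights. -/
theorem srsw_lorenz_dominance (m : ℕ) (hm : 0 < m) (s : Fin m → ℝ)
    (hs : ∀ i, 0 < s i)
    (hsorted : ∀ i j : Fin m, i ≤ j → s j ≤ s i) :
    ∀ k : ℕ, k ≤ m →
      (∑ i ∈ univ.filter (fun i : Fin m => (i : ℕ) < k), Real.sqrt (s i)) * (∑ i, s i) ≤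
        (∑ i ∈ univ.filter (fun i : Fin m => (i : ℕ) < k), s i) * (∑ i, Real.sqrt (s i)) :=
  srsw_lorenz_dominance_general m s hs hsorted
end

section
/- Let f : ℝ → ℝ be concave and monotone (nondecreasing) on [0,∞) with f(0) ≥ 0 and f(x) > 0 for all x > 0. Let m be a positive natural number and s : Fin m → ℝ with s i > 0 for all i, sorted in decreasing order (i ≤ j implies s i ≥ s j). Then for every k ≤ m, (∑_{i < k} f (s i)) · (∑_{i} s i) ≤ (∑_{i < k} s i) · (∑_{i} f (s i)); that is, applying f to the stakes weakly decreases the cumulative weight share of the top k validators, for every k. -/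
/-!
Concavity with `f 0 ≥ 0` makes `f x / x` antitone, so for a top validator `i` and a lower one `j`
we have `f (s i) * s j ≤ f (s j) * s i`. Summing these cross inequalities over all such pairs,
and adding the same top-by-top product to both sides, gives the claim.
-/

open Finset

/-- `f x / x` is antitone on `(0, ∞)`, stated without division: `y` is the convex combination
`(1 - y / x) • 0 + (y / x) • x`, and the `f 0` term is dropped since it is nonnegative. -/
theorem ConcaveOn.apply_mul_le_apply_mul_of_le {𝕜 : Type*} [Field 𝕜] [LinearOrder 𝕜]
    [IsStrictOrderedRing 𝕜] {f : 𝕜 → 𝕜} (hf : ConcaveOn 𝕜 (Set.Ici 0) f) (hf0 : 0 ≤ f 0)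
    {x y : 𝕜} (hy : 0 ≤ y) (hyx : y ≤ x) : f x * y ≤ f y * x := by
  obtain rfl | hx := (hy.trans hyx).eq_or_lt
  · obtain rfl : y = 0 := le_antisymm hyx hy
    simp
  have ht : y / x ≤ 1 := (div_le_one hx).2 hyx
  have hconv := hf.2 Set.self_mem_Ici hx.le (sub_nonneg.2 ht) (div_nonneg hy hx.le)
    (sub_add_cancel 1 (y / x))
  simp only [smul_eq_mul, mul_zero, zero_add, div_mul_cancel₀ y hx.ne'] at hconv
  have hdrop : y / x * f x ≤ f y := by linarith [mul_nonneg (sub_nonneg.2 ht) hf0]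
  calc f x * y = y / x * f x * x := by field_simp
    _ ≤ f y * x := mul_le_mul_of_nonneg_right hdrop hx.le

section CrossSums

variable {ι R : Type*} [CommSemiring R] [PartialOrder R] [IsOrderedAddMonoid R]

theorem Finset.sum_mul_sum_le_sum_mul_sum_of_forall_mul_le {s t : Finset ι} {u v : ι → R}
    (h : ∀ i ∈ s, ∀ j ∈ t, u i * v j ≤ v i * u j) :
    (∑ i ∈ s, u i) * (∑ j ∈ t, v j) ≤ (∑ i ∈ s, v i) * (∑ j ∈ t, u j) := by
  simp only [sum_mul_sum]
  exact sum_le_sum fun i hi => sum_le_sum fun j hj => h i hi j hj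

theorem Finset.sum_filter_mul_sum_le_of_forall_mul_le (s : Finset ι) (p : ι → Prop)
    [DecidablePred p] {u v : ι → R}
    (h : ∀ i ∈ s.filter p, ∀ j ∈ s.filter (¬ p ·), u i * v j ≤ v i * u j) :
    (∑ i ∈ s.filter p, u i) * (∑ i ∈ s, v i) ≤ (∑ i ∈ s.filter p, v i) * (∑ i ∈ s, u i) := by
  rw [← sum_filter_add_sum_filter_not s p v, ← sum_filter_add_sum_filter_not s p u,
    mul_add, mul_add, mul_comm (∑ i ∈ s.filter p, u i) (∑ i ∈ s.filter p, v i)]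
  exact add_le_add le_rfl (sum_mul_sum_le_sum_mul_sum_of_forall_mul_le h)

end CrossSums

theorem concave_reweighting_lorenz_dominance_general (f : ℝ → ℝ)
    (hconc : ConcaveOn ℝ (Set.Ici (0 : ℝ)) f)
    (hf0 : 0 ≤ f 0)
    (m : ℕ) (s : Fin m → ℝ)
    (hs : ∀ i, 0 < s i)
    (hsorted : ∀ i j : Fin m, i ≤ j → s j ≤ s i) :
    ∀ k : ℕ, k ≤ m →
      (∑ i ∈ univ.filter (fun i : Fin m => (i : ℕ) < k), f (s i)) * (∑ i, s i) ≤
        (∑ i ∈ univ.filter (fun i : Fin m => (i : ℕ) < k), s i) * (∑ i, f (s i)) := by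
  intro k _
  refine sum_filter_mul_sum_le_of_forall_mul_le _ _ fun i hi j hj => ?_
  simp only [mem_filter, mem_univ, true_and, not_lt] at hi hj
  have hji : s j ≤ s i := hsorted i j (Fin.le_def.2 (hi.le.trans hj))
  rw [mul_comm (s i)]
  exact hconc.apply_mul_le_apply_mul_of_le hf0 (hs j).le hji

/-- Any concave, nondecreasing reweighting `f` on `[0, ∞)` with `f 0 ≥ 0` and `f > 0` on
positives weakly decreases the cumulative weight share of the top `k` validators, for
stakes sorted in decreasing order. -/
theorem concave_reweighting_lorenz_dominance (f : ℝ → ℝ)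
    (hconc : ConcaveOn ℝ (Set.Ici (0 : ℝ)) f)
    (hmono : MonotoneOn f (Set.Ici (0 : ℝ)))
    (hf0 : 0 ≤ f 0) (hfpos : ∀ x : ℝ, 0 < x → 0 < f x)
    (m : ℕ) (hm : 0 < m) (s : Fin m → ℝ)
    (hs : ∀ i, 0 < s i)
    (hsorted : ∀ i j : Fin m, i ≤ j → s j ≤ s i) :
    ∀ k : ℕ, k ≤ m →
      (∑ i ∈ univ.filter (fun i : Fin m => (i : ℕ) < k), f (s i)) * (∑ i, s i) ≤
        (∑ i ∈ univ.filter (fun i : Fin m => (i : ℕ) < k), s i) * (∑ i, f (s i)) :=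
  concave_reweighting_lorenz_dominance_general f hconc hf0 m s hs hsorted
end

section
/- Let m be a positive natural number, w : Fin m → ℝ with w i > 0 for all i, and T a real number with 0 < T ≤ ∑_i w i. Then the set of cardinalities |K| over subsets K ⊆ Fin m with ∑_{i ∈ K} w i ≥ T has a minimum, and this minimum equals the least natural number k such that the sum of the k largest values of w is at least T. -/
open Finset

/-!
A coalition `K` weighs at most the `#K` largest weights: the `j`-th smallest element of
`σ⁻¹ K` has index at least `j`, so antitonicity of `w ∘ σ` compares the two sums termwise.
Conversely the `k` largest weights form a coalition of size `k`.
-/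

theorem Fin.val_le_of_strictMono {k m : ℕ} {f : Fin k → Fin m} (hf : StrictMono f) (j : Fin k) :
    (j : ℕ) ≤ f j := by
  simpa using card_le_card_of_injOn f (s := Iio j) (t := Iio (f j))
    (fun i hi => by simpa using hf (by simpa using hi)) hf.injective.injOn

theorem Fin.sum_filter_val_lt {M : Type*} [AddCommMonoid M] {k m : ℕ} (h : k ≤ m) (f : Fin m → M) :
    ∑ i ∈ univ.filter (fun i : Fin m => (i : ℕ) < k), f i = ∑ j : Fin k, f (Fin.castLE h j) := by
  have hmap : univ.filter (fun i : Fin m => (i : ℕ) < k) = univ.map (Fin.castLEEmb h) := by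
    ext i
    simp [Fin.ext_iff, Fin.exists_iff]
  rw [hmap, sum_map]
  rfl

theorem Antitone.sum_le_sum_filter_val_lt_card {M : Type*} [AddCommMonoid M] [PartialOrder M]
    [IsOrderedAddMonoid M] {m : ℕ} {f : Fin m → M} (hf : Antitone f) (s : Finset (Fin m)) :
    ∑ i ∈ s, f i ≤ ∑ i ∈ univ.filter (fun i : Fin m => (i : ℕ) < #s), f i := by
  have hs : ∑ i ∈ s, f i = ∑ j : Fin #s, f (s.orderEmbOfFin rfl j) := by
    conv_lhs => rw [← s.map_orderEmbOfFin_univ rfl, sum_map]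
    rfl
  rw [hs, Fin.sum_filter_val_lt (card_le_univ s |>.trans_eq (Fintype.card_fin m))]
  exact sum_le_sum fun j _ => hf (Fin.val_le_of_strictMono (s.orderEmbOfFin rfl).strictMono j)

theorem min_coalition_card_eq_least_top_k_general (m : ℕ) (w : Fin m → ℝ)
    (T : ℝ) (hT' : T ≤ ∑ i, w i)
    (σ : Equiv.Perm (Fin m))
    (hσ : ∀ i j : Fin m, i ≤ j → w (σ j) ≤ w (σ i)) :
    IsLeast {n : ℕ | ∃ K : Finset (Fin m), K.card = n ∧ T ≤ ∑ i ∈ K, w i}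
      (sInf {k : ℕ |
        T ≤ ∑ i ∈ univ.filter (fun i : Fin m => (i : ℕ) < k), w (σ i)}) := by
  set A := {k : ℕ | T ≤ ∑ i ∈ univ.filter (fun i : Fin m => (i : ℕ) < k), w (σ i)}
  have hm : m ∈ A := by
    simpa [A, Equiv.sum_comp σ w] using hT'
  have hk₀ : sInf A ∈ A := Nat.sInf_mem ⟨m, hm⟩
  refine ⟨⟨(univ.filter fun i : Fin m => (i : ℕ) < sInf A).map σ.toEmbedding, ?_, ?_⟩, ?_⟩
  · rw [card_map, Fin.card_filter_val_lt, min_eq_right (Nat.sInf_le hm)]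
  · rwa [sum_map]
  · rintro _ ⟨K, rfl, hK⟩
    have hK_le_top := Antitone.sum_le_sum_filter_val_lt_card (f := w ∘ σ) (fun _ _ => hσ _ _)
      (K.map σ.symm.toEmbedding)
    simp only [sum_map, card_map, Function.comp_apply, Equiv.coe_toEmbedding,
      Equiv.apply_symm_apply] at hK_le_top
    exact Nat.sInf_le (hK.trans hK_le_top)

/-- The minimal number of validators whose combined weight reaches a threshold `T`
exists, and it equals the least `k` such that the sum of the `k` largest weights
(i.e., the first `k` weights after sorting in decreasing order by `σ`) is at least `T`. -/
theorem min_coalition_card_eq_least_top_k (m : ℕ) (hm : 0 < m) (w : Fin m → ℝ)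
    (hw : ∀ i, 0 < w i) (T : ℝ) (hT : 0 < T) (hT' : T ≤ ∑ i, w i)
    (σ : Equiv.Perm (Fin m))
    (hσ : ∀ i j : Fin m, i ≤ j → w (σ j) ≤ w (σ i)) :
    IsLeast {n : ℕ | ∃ K : Finset (Fin m), K.card = n ∧ T ≤ ∑ i ∈ K, w i}
      (sInf {k : ℕ |
        T ≤ ∑ i ∈ univ.filter (fun i : Fin m => (i : ℕ) < k), w (σ i)}) :=
  min_coalition_card_eq_least_top_k_general m w T hT' σ hσ
end

section
/- Let m be a positive natural number and s : Fin m → ℝ with s i > 0 for all i. Define, for a weight function w : Fin m → ℝ, N_L(w) as the minimum cardinality of a subset K ⊆ Fin m such that ∑_{i ∈ K} w i ≥ (1/3) · ∑_i w i. Then N_L(fun i => Real.sqrt (s i)) ≥ N_L(s); that is, the Nakamoto coefficient for liveness under the Square Root Stake Weight model is at least that under the linear stake-weight model. -/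
open Finset

/-- The Nakamoto coefficient for liveness of a weight function `w` on `m` validators:
the minimum cardinality of a subset of validators whose cumulative weight is at least
one-third of the total weight. -/
noncomputable def nakamotoLiveness (m : ℕ) (w : Fin m → ℝ) : ℕ :=
  sInf {n : ℕ | ∃ K : Finset (Fin m), K.card = n ∧ (1 / 3 : ℝ) * ∑ i, w i ≤ ∑ i ∈ K, w i}

/-! Replace a minimum `√s`-coalition of size `k` by a `k`-set maximizing the `√s`-weight; by an
exchange argument the latter consists of validators of largest stake. On such a set the share of
`s = (√s)²` dominates the share of `√s`, because `√s_i · s_j ≤ s_i · √s_j` whenever `s_j ≤ s_i`. -/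

section TopSet

variable {ι α : Type*}

def IsTopSet [LE α] (w : ι → α) (K : Finset ι) : Prop :=
  ∀ i ∈ K, ∀ j ∉ K, w j ≤ w i

theorem isTopSet_of_forall_card_eq_sum_le [DecidableEq ι] [AddCommMonoid α] [LinearOrder α]
    [IsOrderedCancelAddMonoid α] {w : ι → α} {K : Finset ι}
    (hmax : ∀ L : Finset ι, L.card = K.card → ∑ i ∈ L, w i ≤ ∑ i ∈ K, w i) :
    IsTopSet w K := by
  intro i hi j hj
  by_contra! hlt
  have hcard : (insert j (K.erase i)).card = K.card := by
    rw [card_insert_of_notMem (fun h => hj (mem_of_mem_erase h)), card_erase_add_one hi]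
  have hswap : ∑ k ∈ K, w k + w j = ∑ k ∈ insert j (K.erase i), w k + w i := by
    rw [sum_insert (fun h => hj (mem_of_mem_erase h)), ← add_sum_erase K w hi]
    abel
  have hgain := add_lt_add_of_le_of_lt (hmax _ hcard) hlt
  rw [hswap] at hgain
  exact lt_irrefl _ hgain

theorem sum_mul_sum_le_of_forall_mem_notMem [Fintype ι] [DecidableEq ι] [CommSemiring α]
    [PartialOrder α] [IsOrderedRing α] {f g : ι → α} {K : Finset ι}
    (h : ∀ i ∈ K, ∀ j ∉ K, g i * f j ≤ f i * g j) :
    (∑ i ∈ K, g i) * ∑ i, f i ≤ (∑ i ∈ K, f i) * ∑ i, g i := by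
  have hcompl : (∑ i ∈ K, g i) * ∑ j ∈ Kᶜ, f j ≤ (∑ i ∈ K, f i) * ∑ j ∈ Kᶜ, g j := by
    rw [sum_mul_sum, sum_mul_sum]
    exact sum_le_sum fun i hi => sum_le_sum fun j hj => h i hi j (mem_compl.1 hj)
  rw [← sum_add_sum_compl K f, ← sum_add_sum_compl K g, mul_add, mul_add, mul_comm]
  exact add_le_add le_rfl hcompl

theorem IsTopSet.sum_mul_sum_sq_le [Fintype ι] [DecidableEq ι] {w : ι → ℝ} {K : Finset ι}
    (hK : IsTopSet w K) (hw : ∀ i, 0 ≤ w i) :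
    (∑ i ∈ K, w i) * ∑ i, w i ^ 2 ≤ (∑ i ∈ K, w i ^ 2) * ∑ i, w i :=
  sum_mul_sum_le_of_forall_mem_notMem fun i hi j hj => by
    have := hK i hi j hj
    nlinarith [mul_nonneg (hw i) (hw j)]

end TopSet

/-- Lemma 1 (liveness half): the Nakamoto coefficient for liveness under the
Square Root Stake Weight model is at least that under the linear stake-weight model. -/
theorem srsw_nakamoto_liveness_ge (m : ℕ) (hm : 0 < m) (s : Fin m → ℝ)
    (hs : ∀ i, 0 < s i) :
    nakamotoLiveness m s ≤ nakamotoLiveness m (fun i => Real.sqrt (s i)) := by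
  set k := nakamotoLiveness m fun i => √(s i)
  have hTq : 0 < ∑ i, √(s i) :=
    sum_pos (fun i _ => Real.sqrt_pos.2 (hs i)) ⟨⟨0, hm⟩, mem_univ _⟩
  obtain ⟨K, hKcard, hK⟩ : k ∈ {n : ℕ | ∃ K : Finset (Fin m), K.card = n ∧
      (1 / 3 : ℝ) * ∑ i, √(s i) ≤ ∑ i ∈ K, √(s i)} :=
    Nat.sInf_mem ⟨m, univ, card_fin m, by linarith⟩
  obtain ⟨K', hK'mem, hK'max⟩ := (powersetCard k univ).exists_max_image
    (fun L => ∑ i ∈ L, √(s i)) ⟨K, mem_powersetCard.2 ⟨subset_univ K, hKcard⟩⟩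
  have hK'card : K'.card = k := (mem_powersetCard.1 hK'mem).2
  have htop : IsTopSet (fun i => √(s i)) K' := isTopSet_of_forall_card_eq_sum_le fun L hL =>
    hK'max L (mem_powersetCard.2 ⟨subset_univ L, hL.trans hK'card⟩)
  have hshare := htop.sum_mul_sum_sq_le fun i => Real.sqrt_nonneg (s i)
  simp only [Real.sq_sqrt (hs _).le] at hshare
  have hK'third : (1 / 3 : ℝ) * ∑ i, √(s i) ≤ ∑ i ∈ K', √(s i) :=
    hK.trans (hK'max K (mem_powersetCard.2 ⟨subset_univ K, hKcard⟩))
  have hT : 0 ≤ ∑ i, s i := sum_nonneg fun i _ => (hs i).le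
  refine Nat.sInf_le ⟨K', hK'card, le_of_mul_le_mul_right ?_ hTq⟩
  calc (1 / 3 * ∑ i, s i) * ∑ i, √(s i)
      = (1 / 3 * ∑ i, √(s i)) * ∑ i, s i := by ring
    _ ≤ (∑ i ∈ K', √(s i)) * ∑ i, s i := mul_le_mul_of_nonneg_right hK'third hT
    _ ≤ (∑ i ∈ K', s i) * ∑ i, √(s i) := hshare
end

section
/- Let m be a positive natural number and s : Fin m → ℝ with s i ≥ Real.exp 2 for all i. Define, for a weight function w : Fin m → ℝ, N_L(w) as the minimum cardinality of a subset K ⊆ Fin m such that ∑_{i ∈ K} w i ≥ (1/3) · ∑_i w i. Then N_L(fun i => Real.log (s i)) ≥ N_L(fun i => Real.sqrt (s i)); that is, the Nakamoto coefficient for liveness under the Logarithmic Stake Weight model is at least that under the Square Root Stake Weight model. -/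
/-!
Let `n` be the LSW coefficient. Among the `n`-element sets of validators, one with maximal
log-weight reaches a third of the total log-weight, and by an exchange argument it consists of
the `n` largest stakes. Since `log x / √x` decreases on `[e², ∞)`, the ratio `√s / log s` is
larger on this set than off it, and a set whose share of one weight is at least `1/3` then has
share at least `1/3` of any weight whose ratio to the first is larger on it. Hence the same set
is an SRSW-liveness coalition.
-/

open Finset

lemma nakamotoLiveness_le_card {m : ℕ} {w : Fin m → ℝ} {K : Finset (Fin m)}
    (hK : (1 / 3 : ℝ) * ∑ i, w i ≤ ∑ i ∈ K, w i) : nakamotoLiveness m w ≤ K.card :=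
  Nat.sInf_le ⟨K, rfl, hK⟩

lemma exists_card_eq_nakamotoLiveness {m : ℕ} {w : Fin m → ℝ} (hw : 0 ≤ ∑ i, w i) :
    ∃ K : Finset (Fin m), K.card = nakamotoLiveness m w ∧
      (1 / 3 : ℝ) * ∑ i, w i ≤ ∑ i ∈ K, w i :=
  Nat.sInf_mem (s := {n | ∃ K : Finset (Fin m), K.card = n ∧ _}) ⟨m, univ, by simp, by linarith⟩

lemma Finset.exists_card_eq_sum_le_sum_forall_le {ι M : Type*} [Fintype ι] [DecidableEq ι]
    [AddCommMonoid M] [LinearOrder M] [IsOrderedCancelAddMonoid M] (f : ι → M)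
    (K : Finset ι) :
    ∃ T : Finset ι, T.card = K.card ∧ ∑ i ∈ K, f i ≤ ∑ i ∈ T, f i ∧
      ∀ i ∈ T, ∀ j ∉ T, f j ≤ f i := by
  have hK : K ∈ univ.powersetCard K.card := mem_powersetCard.mpr ⟨subset_univ K, rfl⟩
  obtain ⟨T, hT, hmax⟩ := exists_max_image _ (fun A => ∑ i ∈ A, f i) ⟨K, hK⟩
  have hTcard : T.card = K.card := (mem_powersetCard.mp hT).2
  refine ⟨T, hTcard, hmax K hK, fun i hi j hj => ?_⟩
  have hjT : j ∉ T.erase i := fun h => hj (mem_of_mem_erase h)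
  have hswap : insert j (T.erase i) ∈ univ.powersetCard K.card := by
    rw [mem_powersetCard, card_insert_of_notMem hjT, card_erase_add_one hi, hTcard]
    exact ⟨subset_univ _, rfl⟩
  have := hmax _ hswap
  rwa [sum_insert hjT, ← add_sum_erase T f hi, add_le_add_iff_right] at this

lemma sum_compl_mul_sum_le_sum_mul_sum_compl {ι : Type*} [Fintype ι] [DecidableEq ι]
    {L Q : ι → ℝ} {T : Finset ι} (hratio : ∀ i ∈ T, ∀ j ∉ T, Q j * L i ≤ Q i * L j) :
    (∑ j ∈ Tᶜ, Q j) * ∑ i ∈ T, L i ≤ (∑ i ∈ T, Q i) * ∑ j ∈ Tᶜ, L j := by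
  rw [sum_mul_sum, sum_mul_sum, sum_comm]
  exact sum_le_sum fun i hi => sum_le_sum fun j hj => hratio i hi j (mem_compl.mp hj)

lemma le_sum_of_le_sum_of_ratio_le {ι : Type*} [Fintype ι] [DecidableEq ι]
    {L Q : ι → ℝ} {T : Finset ι} {c : ℝ} (hc : 0 ≤ c) (hQ : 0 ≤ ∑ i ∈ T, Q i)
    (hL : 0 < ∑ i ∈ T, L i) (hratio : ∀ i ∈ T, ∀ j ∉ T, Q j * L i ≤ Q i * L j)
    (h : c * ∑ i, L i ≤ ∑ i ∈ T, L i) : c * ∑ i, Q i ≤ ∑ i ∈ T, Q i := by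
  rw [← sum_add_sum_compl T L] at h
  rw [← sum_add_sum_compl T Q]
  have hcross := sum_compl_mul_sum_le_sum_mul_sum_compl hratio
  have hcompl : c * ∑ j ∈ Tᶜ, Q j ≤ (1 - c) * ∑ i ∈ T, Q i := by
    refine le_of_mul_le_mul_right ?_ hL
    calc c * (∑ j ∈ Tᶜ, Q j) * ∑ i ∈ T, L i
        = c * ((∑ j ∈ Tᶜ, Q j) * ∑ i ∈ T, L i) := mul_assoc _ _ _
      _ ≤ c * ((∑ i ∈ T, Q i) * ∑ j ∈ Tᶜ, L j) := mul_le_mul_of_nonneg_left hcross hc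
      _ = (∑ i ∈ T, Q i) * (c * ∑ j ∈ Tᶜ, L j) := by ring
      _ ≤ (∑ i ∈ T, Q i) * ((1 - c) * ∑ i ∈ T, L i) :=
          mul_le_mul_of_nonneg_left (by linarith) hQ
      _ = (1 - c) * (∑ i ∈ T, Q i) * ∑ i ∈ T, L i := by ring
  linarith

lemma Real.log_mul_sqrt_le_log_mul_sqrt {x y : ℝ} (hy : Real.exp 2 ≤ y) (hxy : y ≤ x) :
    Real.log x * √y ≤ Real.log y * √x := by
  have hy0 : 0 < y := (Real.exp_pos 2).trans_le hy
  have hanti := Real.log_div_sqrt_antitoneOn (Set.mem_Ici.mpr hy)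
    (Set.mem_Ici.mpr (hy.trans hxy)) hxy
  rwa [div_le_div_iff₀ (Real.sqrt_pos.mpr (hy0.trans_le hxy)) (Real.sqrt_pos.mpr hy0)] at hanti

/-- Theorem 2 (liveness part): for stakes at least `e²`, the Nakamoto coefficient for
liveness under the Logarithmic Stake Weight model is at least that under the
Square Root Stake Weight model. -/
theorem lsw_nakamoto_liveness_ge_srsw (m : ℕ) (hm : 0 < m) (s : Fin m → ℝ)
    (hs : ∀ i, Real.exp 2 ≤ s i) :
    nakamotoLiveness m (fun i => Real.sqrt (s i)) ≤
      nakamotoLiveness m (fun i => Real.log (s i)) := by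
  have hs0 : ∀ i, 0 < s i := fun i => (Real.exp_pos 2).trans_le (hs i)
  have hlog : ∀ i, 0 < Real.log (s i) := fun i =>
    (by norm_num : (0 : ℝ) < 2).trans_le (Real.le_log_iff_exp_le (hs0 i) |>.mpr (hs i))
  obtain ⟨K, hKcard, hK⟩ := exists_card_eq_nakamotoLiveness
    (sum_nonneg fun i _ => (hlog i).le)
  obtain ⟨T, hTcard, hKT, htop⟩ :=
    exists_card_eq_sum_le_sum_forall_le (fun i => Real.log (s i)) K
  have hratio : ∀ i ∈ T, ∀ j ∉ T, √(s j) * Real.log (s i) ≤ √(s i) * Real.log (s j) := by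
    intro i hi j hj
    have hsji := (Real.log_le_log_iff (hs0 j) (hs0 i)).mp (htop i hi j hj)
    linarith [Real.log_mul_sqrt_le_log_mul_sqrt (hs j) hsji]
  have hLtot : 0 < ∑ i, Real.log (s i) :=
    sum_pos (fun i _ => hlog i) (univ_nonempty_iff.mpr (Fin.pos_iff_nonempty.mp hm))
  have hQT := le_sum_of_le_sum_of_ratio_le (by norm_num)
    (sum_nonneg fun i _ => Real.sqrt_nonneg _) (by linarith) hratio (hK.trans hKT)
  exact (nakamotoLiveness_le_card hQT).trans_eq (hTcard.trans hKcard)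
end

section
/- Let m be a positive natural number and s : Fin m → ℝ with s i ≥ Real.exp 1 for all i. Define, for a weight function w : Fin m → ℝ and θ ∈ {1/3, 2/3}, N_θ(w) as the minimum cardinality of a subset K ⊆ Fin m such that ∑_{i ∈ K} w i ≥ θ · ∑_i w i. Then N_{1/3}(fun i => Real.log (s i)) ≥ N_{1/3}(s) and N_{2/3}(fun i => Real.log (s i)) ≥ N_{2/3}(s); that is, both Nakamoto coefficients (for liveness and for safety) under the Logarithmic Stake Weight model are at least those under the linear stake-weight model. -/
/-!
Let `n` be the log-weight Nakamoto coefficient and choose, among the `n`-element sets of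
validators, one set `T` of maximal log-weight. By an exchange argument `T` consists of the
`n` largest stakes, and since `log x / x` decreases on `[e, ∞)`,
`log (s i) * s j ≤ s i * log (s j)` for `i ∈ T`, `j ∉ T`. Summing these shows that the
log-weight share of `T` is at most its stake share, so `T`, which reaches the fraction `θ`
of the log-weight, also reaches the fraction `θ` of the stake.
-/

open Finset

/-- The fraction-`θ` Nakamoto coefficient of a weight function `w` on `m` validators:
the minimum cardinality of a subset of validators whose cumulative weight is at least
the fraction `θ` of the total weight. -/
noncomputable def nakamotoCoeff (m : ℕ) (θ : ℝ) (w : Fin m → ℝ) : ℕ :=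
  sInf {n : ℕ | ∃ K : Finset (Fin m), K.card = n ∧ θ * ∑ i, w i ≤ ∑ i ∈ K, w i}

lemma log_mul_le_mul_log_of_exp_one_le {a b : ℝ} (hb : Real.exp 1 ≤ b) (hab : b ≤ a) :
    Real.log a * b ≤ a * Real.log b := by
  have hb₀ : 0 < b := (Real.exp_pos 1).trans_le hb
  have h := Real.log_div_self_antitoneOn hb (hb.trans hab) hab
  rwa [div_le_div_iff₀ (hb₀.trans_le hab) hb₀, mul_comm (Real.log b)] at h

section Exchange

variable {ι R : Type*} [DecidableEq ι]

lemma Finset.sum_mul_sum_univ_le_of_cross [Fintype ι] [CommRing R] [LinearOrder R]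
    [IsStrictOrderedRing R]
    (T : Finset ι) {f g : ι → R} (hcross : ∀ i ∈ T, ∀ j ∉ T, g i * f j ≤ f i * g j) :
    (∑ i ∈ T, g i) * ∑ i, f i ≤ (∑ i ∈ T, f i) * ∑ i, g i := by
  have hcompl : (∑ i ∈ T, g i) * ∑ j ∈ Tᶜ, f j ≤ (∑ i ∈ T, f i) * ∑ j ∈ Tᶜ, g j := by
    rw [sum_mul_sum, sum_mul_sum]
    exact sum_le_sum fun i hi => sum_le_sum fun j hj => hcross i hi j (mem_compl.1 hj)
  rw [← sum_add_sum_compl T f, ← sum_add_sum_compl T g, mul_add, mul_add, mul_comm]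
  exact add_le_add le_rfl hcompl

lemma Finset.le_of_forall_sum_le_of_mem_of_notMem [AddCommGroup R] [LinearOrder R]
    [IsOrderedAddMonoid R] {g : ι → R} {T : Finset ι}
    (hmax : ∀ K : Finset ι, K.card = T.card → ∑ k ∈ K, g k ≤ ∑ k ∈ T, g k)
    {i j : ι} (hi : i ∈ T) (hj : j ∉ T) : g j ≤ g i := by
  have hj' : j ∉ T.erase i := fun h => hj (mem_of_mem_erase h)
  have hcard : (insert j (T.erase i)).card = T.card := by
    rw [card_insert_of_notMem hj', card_erase_add_one hi]
  have h := hmax _ hcard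
  rw [sum_insert hj', ← add_le_add_iff_left (g i), add_left_comm, add_sum_erase T g hi] at h
  exact le_of_add_le_add_right (by rwa [add_comm] at h)

end Exchange

lemma nakamotoCoeff_le_card {m : ℕ} {θ : ℝ} {w : Fin m → ℝ} (K : Finset (Fin m))
    (hK : θ * ∑ i, w i ≤ ∑ i ∈ K, w i) : nakamotoCoeff m θ w ≤ K.card :=
  Nat.sInf_le ⟨K, rfl, hK⟩

lemma exists_card_eq_nakamotoCoeff {m : ℕ} {θ : ℝ} {w : Fin m → ℝ} (hθ : θ ≤ 1)
    (hw : 0 ≤ ∑ i, w i) :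
    ∃ K : Finset (Fin m), K.card = nakamotoCoeff m θ w ∧ θ * ∑ i, w i ≤ ∑ i ∈ K, w i := by
  have hne : {n | ∃ K : Finset (Fin m), K.card = n ∧ θ * ∑ i, w i ≤ ∑ i ∈ K, w i}.Nonempty :=
    ⟨_, univ, rfl, mul_le_of_le_one_left hw hθ⟩
  exact Nat.sInf_mem hne

theorem nakamotoCoeff_le_of_cross {m : ℕ} {θ : ℝ} {f g : Fin m → ℝ} (hθ : θ ≤ 1)
    (hf : 0 ≤ ∑ i, f i) (hg : 0 < ∑ i, g i)
    (hcross : ∀ i j, g j ≤ g i → g i * f j ≤ f i * g j) :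
    nakamotoCoeff m θ f ≤ nakamotoCoeff m θ g := by
  obtain ⟨K, hKcard, hK⟩ := exists_card_eq_nakamotoCoeff (θ := θ) hθ hg.le
  obtain ⟨T, hTmem, hTmax⟩ := exists_max_image (powersetCard K.card univ)
    (fun A => ∑ i ∈ A, g i) (powersetCard_nonempty.2 (card_le_univ K))
  have hTcard : T.card = K.card := (mem_powersetCard.1 hTmem).2
  have hmax : ∀ A : Finset (Fin m), A.card = T.card → ∑ i ∈ A, g i ≤ ∑ i ∈ T, g i :=
    fun A hA => hTmax A (mem_powersetCard.2 ⟨subset_univ A, hA.trans hTcard⟩)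
  have hTg : θ * ∑ i, g i ≤ ∑ i ∈ T, g i := hK.trans (hmax K hTcard.symm)
  have hshare := sum_mul_sum_univ_le_of_cross T fun i hi j hj =>
    hcross i j (le_of_forall_sum_le_of_mem_of_notMem hmax hi hj)
  have hTf : θ * ∑ i, f i ≤ ∑ i ∈ T, f i := by
    refine le_of_mul_le_mul_right ?_ hg
    calc θ * (∑ i, f i) * ∑ i, g i = θ * (∑ i, g i) * ∑ i, f i := by ring
      _ ≤ (∑ i ∈ T, g i) * ∑ i, f i := mul_le_mul_of_nonneg_right hTg hf
      _ ≤ (∑ i ∈ T, f i) * ∑ i, g i := hshare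
  exact hKcard ▸ hTcard ▸ nakamotoCoeff_le_card T hTf

/-- Corollary 1: for stakes at least `e`, both Nakamoto coefficients (for liveness,
`θ = 1/3`, and for safety, `θ = 2/3`) under the Logarithmic Stake Weight model are at
least those under the linear stake-weight model. -/
theorem lsw_nakamoto_ge_linear (m : ℕ) (hm : 0 < m) (s : Fin m → ℝ)
    (hs : ∀ i, Real.exp 1 ≤ s i) :
    nakamotoCoeff m (1 / 3) s ≤ nakamotoCoeff m (1 / 3) (fun i => Real.log (s i)) ∧
      nakamotoCoeff m (2 / 3) s ≤ nakamotoCoeff m (2 / 3) (fun i => Real.log (s i)) := by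
  have hs₀ : ∀ i, 0 < s i := fun i => (Real.exp_pos 1).trans_le (hs i)
  have hsum : 0 ≤ ∑ i, s i := sum_nonneg fun i _ => (hs₀ i).le
  have hlog : 0 < ∑ i, Real.log (s i) :=
    sum_pos (fun i _ => Real.log_pos ((Real.one_lt_exp_iff.2 one_pos).trans_le (hs i)))
      (univ_nonempty_iff.2 ⟨⟨0, hm⟩⟩)
  have hcross : ∀ i j, Real.log (s j) ≤ Real.log (s i) →
      Real.log (s i) * s j ≤ s i * Real.log (s j) := fun i j h =>
    log_mul_le_mul_log_of_exp_one_le (hs j) ((Real.log_le_log_iff (hs₀ j) (hs₀ i)).1 h)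
  exact ⟨nakamotoCoeff_le_of_cross (by norm_num) hsum hlog hcross,
    nakamotoCoeff_le_of_cross (by norm_num) hsum hlog hcross⟩
end

section
/- Let m be a positive natural number and s : Fin m → ℝ with s i > 0 for all i. Define the Herfindahl-Hirschman Index of a positive weight function w : Fin m → ℝ as HHI(w) = ∑_{i} (w i / ∑_{j} w j)^2. Then HHI(fun i => Real.sqrt (s i)) ≤ HHI(s); that is, the HHI of the square-root stake weights is at most the HHI of the linear stake weights. -/
open Finset

/-- The Herfindahl-Hirschman Index of a weight function `w` on `m` validators:
the sum of squared normalized weights. -/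
noncomputable def hhi (m : ℕ) (w : Fin m → ℝ) : ℝ :=
  ∑ i, (w i / ∑ j, w j) ^ 2

/-
With `x i = √(s i)` the claim reads `p₂ / p₁² ≤ p₄ / p₂²` for the power sums `pₖ = ∑ xᵢᵏ`,
i.e. `p₂³ ≤ p₁² p₄`. This follows from the log-convexity of `k ↦ pₖ`: Cauchy–Schwarz gives
`p₂² ≤ p₁ p₃` and `p₃² ≤ p₂ p₄`, hence `p₂⁴ ≤ p₁² p₃² ≤ p₁² p₂ p₄`.
-/

section PowerSums

variable {ι R : Type*} [CommSemiring R] [LinearOrder R] [IsStrictOrderedRing R] [ExistsAddOfLE R]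
  {s : Finset ι} {x : ι → R}

theorem sq_sum_pow_succ_le_sum_pow_mul_sum_pow (hx : ∀ i ∈ s, 0 ≤ x i) (k : ℕ) :
    (∑ i ∈ s, x i ^ (k + 1)) ^ 2 ≤ (∑ i ∈ s, x i ^ k) * ∑ i ∈ s, x i ^ (k + 2) :=
  sum_sq_le_sum_mul_sum_of_sq_le_mul s (fun i hi => pow_nonneg (hx i hi) k)
    (fun i hi => pow_nonneg (hx i hi) (k + 2)) fun i _ => le_of_eq (by ring)

theorem pow_three_sum_sq_le_sq_sum_mul_sum_pow_four (hx : ∀ i ∈ s, 0 ≤ x i) :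
    (∑ i ∈ s, x i ^ 2) ^ 3 ≤ (∑ i ∈ s, x i) ^ 2 * ∑ i ∈ s, x i ^ 4 := by
  set p₁ := ∑ i ∈ s, x i
  set p₂ := ∑ i ∈ s, x i ^ 2
  set p₃ := ∑ i ∈ s, x i ^ 3
  set p₄ := ∑ i ∈ s, x i ^ 4
  have h₁₂₃ : p₂ ^ 2 ≤ p₁ * p₃ := by
    simpa only [pow_one] using sq_sum_pow_succ_le_sum_pow_mul_sum_pow hx 1
  have h₂₃₄ : p₃ ^ 2 ≤ p₂ * p₄ := sq_sum_pow_succ_le_sum_pow_mul_sum_pow hx 2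
  have hp₂ : 0 ≤ p₂ := sum_nonneg fun i _ => sq_nonneg (x i)
  rcases hp₂.eq_or_lt with hp₂ | hp₂
  · rw [← hp₂, zero_pow three_ne_zero]
    exact mul_nonneg (sq_nonneg _) (sum_nonneg fun i hi => pow_nonneg (hx i hi) 4)
  refine le_of_mul_le_mul_left ?_ hp₂
  calc p₂ * p₂ ^ 3 = (p₂ ^ 2) ^ 2 := by ring
    _ ≤ (p₁ * p₃) ^ 2 := pow_le_pow_left₀ (sq_nonneg _) h₁₂₃ 2
    _ = p₁ ^ 2 * p₃ ^ 2 := mul_pow p₁ p₃ 2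
    _ ≤ p₁ ^ 2 * (p₂ * p₄) := mul_le_mul_of_nonneg_left h₂₃₄ (sq_nonneg _)
    _ = p₂ * (p₁ ^ 2 * p₄) := by ring

end PowerSums

theorem hhi_eq_sum_sq_div_sq_sum (m : ℕ) (w : Fin m → ℝ) :
    hhi m w = (∑ i, w i ^ 2) / (∑ i, w i) ^ 2 := by
  simp only [hhi, div_pow, sum_div]

theorem hhi_le_hhi_sq (m : ℕ) {x : Fin m → ℝ} (hx : ∀ i, 0 ≤ x i) :
    hhi m x ≤ hhi m fun i => x i ^ 2 := by
  have hx' : ∀ i ∈ univ, 0 ≤ x i := fun i _ => hx i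
  simp only [hhi_eq_sum_sq_div_sq_sum, ← pow_mul, Nat.reduceMul]
  rcases (sum_nonneg hx').eq_or_lt with hp₁ | hp₁
  · rw [← hp₁, zero_pow two_ne_zero, div_zero]
    positivity
  have hp₂ : 0 < ∑ i, x i ^ 2 := by
    refine (sum_nonneg fun i _ => sq_nonneg (x i)).lt_of_ne' fun h => hp₁.ne' ?_
    rw [sum_eq_zero_iff_of_nonneg fun i _ => sq_nonneg (x i)] at h
    exact sum_eq_zero fun i hi => pow_eq_zero_iff two_ne_zero |>.mp (h i hi)
  rw [div_le_div_iff₀ (by positivity) (by positivity), ← pow_succ', mul_comm _ (_ ^ 2)]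
  exact pow_three_sum_sq_le_sq_sum_mul_sum_pow_four hx'

theorem srsw_hhi_le_general (m : ℕ) (s : Fin m → ℝ) (hs : ∀ i, 0 < s i) :
    hhi m (fun i => Real.sqrt (s i)) ≤ hhi m s := by
  simpa only [Real.sq_sqrt (hs _).le] using hhi_le_hhi_sq m fun i => Real.sqrt_nonneg (s i)

/-- The HHI of the square-root stake weights is at most the HHI of the linear
stake weights. -/
theorem srsw_hhi_le (m : ℕ) (hm : 0 < m) (s : Fin m → ℝ) (hs : ∀ i, 0 < s i) :
    hhi m (fun i => Real.sqrt (s i)) ≤ hhi m s :=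
  srsw_hhi_le_general m s hs
end

section
/- Let S be a positive real number, n a natural number with n ≥ 2, and C a real number. Then n · Real.sqrt (S / n) = Real.sqrt n · Real.sqrt S, and if C ≥ (Real.sqrt n − 1) / (n − 1) · Real.sqrt S, then Real.sqrt S ≥ n · Real.sqrt (S / n) − (n − 1) · C. -/
/-! Splitting into `n` identities multiplies the reward by `√n`, a gain of `(√n - 1) √S`,
so the `n - 1` extra identities must cost at least that much in total. -/

theorem Real.mul_sqrt_div_self {x : ℝ} (hx : 0 ≤ x) (y : ℝ) :
    x * √(y / x) = √x * √y := by
  rw [Real.sqrt_div' y hx, mul_div_left_comm, Real.div_sqrt, mul_comm]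

theorem sqrt_mul_sub_le_of_div_mul_le {m s C : ℝ} (hm : 1 < m)
    (hC : (√m - 1) / (m - 1) * s ≤ C) : √m * s - (m - 1) * C ≤ s := by
  have hcost : (√m - 1) * s ≤ (m - 1) * C := by
    rwa [div_mul_eq_mul_div, div_le_iff₀ (by linarith), mul_comm C] at hC
  linarith

theorem srsw_sybil_cost_bound_general (S : ℝ) (n : ℕ) (hn : 2 ≤ n) (C : ℝ) :
    (n : ℝ) * Real.sqrt (S / n) = Real.sqrt n * Real.sqrt S ∧
      ((Real.sqrt n - 1) / ((n : ℝ) - 1) * Real.sqrt S ≤ C →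
        (n : ℝ) * Real.sqrt (S / n) - ((n : ℝ) - 1) * C ≤ Real.sqrt S) := by
  have hsplit := Real.mul_sqrt_div_self n.cast_nonneg S
  refine ⟨hsplit, fun hC => hsplit ▸ sqrt_mul_sub_le_of_div_mul_le ?_ hC⟩
  exact_mod_cast hn

/-- Sybil cost bound for SRSW: splitting a stake `S` equally into `n` identities yields
total weight `n · √(S/n) = √n · √S`, and if the Sybil cost `C` satisfies
`C ≥ (√n − 1)/(n − 1) · √S`, then a single identity is at least as rewarding as
splitting into `n` identities. -/
theorem srsw_sybil_cost_bound (S : ℝ) (hS : 0 < S) (n : ℕ) (hn : 2 ≤ n) (C : ℝ) :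
    (n : ℝ) * Real.sqrt (S / n) = Real.sqrt n * Real.sqrt S ∧
      ((Real.sqrt n - 1) / ((n : ℝ) - 1) * Real.sqrt S ≤ C →
        (n : ℝ) * Real.sqrt (S / n) - ((n : ℝ) - 1) * C ≤ Real.sqrt S) :=
  srsw_sybil_cost_bound_general S n hn C
end
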